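/- Let U be a unidependent set of a matroid M with unique circuit C(U) ⊆ U. Then in the exterior algebra, ∂e_U = ± (∂e_{C(U)}) ∧ e_{U \ C(U)}; in particular ∂e_U lies in the ideal generated by the circuit boundaries ∂e_C. -/

import Mathlib

/-!
Removing `i` from the unidependent set `U` leaves an independent set exactly when `i` lies in its
unique circuit `C`, so only the terms of `∂e_U` indexed by `C` survive. For `i ∈ C` one has
`e_{C \ i} ∧ e_{U \ C} = ± e_{U \ i}`, the sign counting the pairs `b < a` with `a ∈ C \ i`,
`b ∈ U \ C`. Its deviation from the count `N` over all of `C` is the number of `b ∈ U \ C` below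
`i`, which is exactly the shift between the positions of `i` in `C` and in `U`; hence
`∂e_U = (-1)^N ∂e_C ∧ e_{U \ C}`.
-/

open Set

/-- A circuit of a matroid: a minimal dependent set. -/
def IsCircuit {α : Type*} (M : Matroid α) (C : Set α) : Prop :=
  M.Dep C ∧ ∀ D, D ⊂ C → ¬ M.Dep D

/-- A broken circuit: a circuit `C` with `|C| > 1` with its minimum element removed. -/
def BrokenCircuit {α : Type*} [LinearOrder α] (M : Matroid α) (B : Set α) : Prop :=
  ∃ C m, IsCircuit M C ∧ m ∈ C ∧ (∀ y ∈ C, m ≤ y) ∧ (C \ {m}).Nonempty ∧ B = C \ {m}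

/-- A no-broken-circuit (NBC) set: an independent set containing no broken circuit. -/
def NBC {α : Type*} [LinearOrder α] (M : Matroid α) (X : Set α) : Prop :=
  M.Indep X ∧ ∀ B, BrokenCircuit M B → ¬ B ⊆ X

/-- The monomial `e_X`: the product, in increasing index order, of the generators
`e_i`, `i ∈ X`, in the exterior algebra on `e_1, …, e_n`. -/
noncomputable def eX (K : Type*) [Field K] {n : ℕ} (X : Finset (Fin n)) :
    ExteriorAlgebra K (Fin n → K) :=
  ((X.sort (· ≤ ·)).map fun i => ExteriorAlgebra.ι K (Pi.single i (1 : K))).prod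

/-- The boundary `∂e_X = Σ_{p=1}^{m} (-1)^p e_{X \ i_p}` for `X = {i_1 < … < i_m}`. -/
noncomputable def delB (K : Type*) [Field K] {n : ℕ} (X : Finset (Fin n)) :
    ExteriorAlgebra K (Fin n → K) :=
  ∑ i ∈ X, ((-1 : K) ^ (((X.filter fun j => j < i)).card + 1)) • eX K (X.erase i)

/-- The Orlik-Solomon ideal: the two-sided ideal (as a subspace) generated by the
boundaries `∂e_C` of the circuits of `M`. -/
noncomputable def OSIdeal (K : Type*) [Field K] {n : ℕ} (M : Matroid (Fin n)) :
    Submodule K (ExteriorAlgebra K (Fin n → K)) :=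
  Submodule.span K
    {x | ∃ a b : ExteriorAlgebra K (Fin n → K), ∃ C : Finset (Fin n),
      IsCircuit M (C : Set (Fin n)) ∧ x = a * delB K C * b}

open Classical

/-- The Orlik-Solomon `χ`-boundary `∂e_X = Σ_p (-1)^p χ(X \ i_p) e_{X \ i_p}`, where
for the Orlik-Solomon algebra `χ` of an (increasingly ordered) independent set is `1`
and `χ` of a dependent set is `0`.  For a circuit `C` this coincides with
`∂e_C = Σ_p (-1)^p e_{C \ i_p}`. -/
noncomputable def chiB (K : Type*) [Field K] {n : ℕ} (M : Matroid (Fin n))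
    (X : Finset (Fin n)) : ExteriorAlgebra K (Fin n → K) :=
  ∑ i ∈ X, (if M.Indep ((X.erase i : Finset (Fin n)) : Set (Fin n)) then
      ((-1 : K) ^ (((X.filter fun j => j < i)).card + 1)) else 0) • eX K (X.erase i)

open Finset

lemma isCircuit_iff_matroid_isCircuit {α : Type*} {M : Matroid α} {C : Set α} :
    IsCircuit M C ↔ M.IsCircuit C := by
  rw [Matroid.isCircuit_iff_forall_ssubset, IsCircuit]
  refine and_congr_right fun hC => forall_congr' fun D => imp_congr_right fun hDC => ?_
  exact Matroid.not_dep_iff (hDC.subset.trans hC.subset_ground)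

lemma Matroid.IsCircuit.indep_diff_singleton_iff {α : Type*} {M : Matroid α} {C U : Set α}
    (hC : M.IsCircuit C) (hCU : C ⊆ U) (hUE : U ⊆ M.E)
    (huniq : ∀ D, M.IsCircuit D → D ⊆ U → D = C) (i : α) :
    M.Indep (U \ {i}) ↔ i ∈ C := by
  refine ⟨fun hind => ?_, fun hiC => ?_⟩
  · by_contra hiC
    exact hC.not_indep (hind.subset (subset_sdiff_singleton hCU hiC))
  · by_contra hdep
    obtain ⟨D, hDU, hD⟩ := (Matroid.not_indep_iff (sdiff_subset.trans hUE)).mp hdep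
      |>.exists_isCircuit_subset
    rw [huniq D hD (hDU.trans sdiff_subset)] at hDU
    exact (hDU hiC).2 rfl

section Monomials

variable (K : Type*) [Field K] {n : ℕ}

lemma eX_singleton (a : Fin n) : eX K {a} = ExteriorAlgebra.ι K (Pi.single a (1 : K)) := by
  simp [eX]

lemma eX_insert_of_forall_lt {s : Finset (Fin n)} {a : Fin n} (h : ∀ b ∈ s, a < b) :
    eX K (insert a s) = eX K {a} * eX K s := by
  rw [eX, sort_insert _ (fun b hb => (h b hb).le) fun ha => lt_irrefl a (h a ha), eX_singleton]
  simp [eX]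

lemma eX_union_of_forall_lt {s t : Finset (Fin n)} (h : ∀ a ∈ s, ∀ b ∈ t, a < b) :
    eX K (s ∪ t) = eX K s * eX K t := by
  induction s using Finset.induction_on_min with
  | empty => simp [eX]
  | insert a s has ih =>
    have hst : ∀ b ∈ s ∪ t, a < b := by
      intro b hb
      rcases mem_union.mp hb with hb | hb
      exacts [has b hb, h a (mem_insert_self a s) b hb]
    rw [Finset.insert_union, eX_insert_of_forall_lt K hst, eX_insert_of_forall_lt K has, mul_assoc,
      ih fun x hx => h x (mem_insert_of_mem hx)]

lemma eX_singleton_mul_comm (a b : Fin n) : eX K {a} * eX K {b} = -(eX K {b} * eX K {a}) := by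
  rw [eX_singleton, eX_singleton]
  exact eq_neg_of_add_eq_zero_left (ExteriorAlgebra.ι_add_mul_swap _ _)

lemma eX_mul_eX_singleton_comm (s : Finset (Fin n)) (a : Fin n) :
    eX K s * eX K {a} = (-1 : K) ^ #s • (eX K {a} * eX K s) := by
  induction s using Finset.induction_on_min with
  | empty => simp [eX]
  | insert b s hbs ih =>
    rw [eX_insert_of_forall_lt K hbs, mul_assoc, ih, mul_smul_comm, ← mul_assoc,
      eX_singleton_mul_comm, card_insert_of_notMem fun hb => lt_irrefl b (hbs b hb), pow_succ,
      mul_comm, mul_smul, neg_mul, mul_assoc, smul_neg, neg_one_smul]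

lemma eX_mul_eX_singleton {s : Finset (Fin n)} {a : Fin n} (ha : a ∉ s) :
    eX K s * eX K {a} = (-1 : K) ^ #{x ∈ s | a < x} • eX K (insert a s) := by
  have hlt : ∀ x ∈ {x ∈ s | x < a}, ∀ y ∈ {x ∈ s | a < x}, x < y := by
    simp only [mem_filter]
    exact fun x hx y hy => hx.2.trans hy.2
  have hs : s = {x ∈ s | x < a} ∪ {x ∈ s | a < x} := by
    ext x
    simp only [Finset.mem_union, mem_filter]
    constructor
    · intro hx
      rcases lt_trichotomy x a with h | rfl | h
      exacts [Or.inl ⟨hx, h⟩, absurd hx ha, Or.inr ⟨hx, h⟩]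
    · rintro (h | h) <;> exact h.1
  have hins : insert a s = {x ∈ s | x < a} ∪ insert a {x ∈ s | a < x} := by
    conv_lhs => rw [hs]
    rw [Finset.union_insert]
  rw [hins, eX_union_of_forall_lt K, eX_insert_of_forall_lt K]
  · conv_lhs => rw [hs, eX_union_of_forall_lt K hlt, mul_assoc, eX_mul_eX_singleton_comm,
      mul_smul_comm]
  · exact fun x hx => (mem_filter.mp hx).2
  · intro x hx y hy
    rcases mem_insert.mp hy with rfl | hy
    exacts [(mem_filter.mp hx).2, hlt x hx y hy]

lemma eX_mul_eX {s t : Finset (Fin n)} (h : Disjoint s t) :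
    eX K s * eX K t = (-1 : K) ^ (∑ b ∈ t, #{a ∈ s | b < a}) • eX K (s ∪ t) := by
  induction t using Finset.induction_on_max generalizing s with
  | empty => simp [eX]
  | insert m t hmt ih =>
    have hmt' : m ∉ t := fun hm => lt_irrefl m (hmt m hm)
    have hms : m ∉ s := disjoint_right.mp h (mem_insert_self m t)
    have hmst : m ∉ s ∪ t := by simp [hms, hmt']
    have hcount : #{x ∈ s ∪ t | m < x} = #{x ∈ s | m < x} := by
      rw [filter_union, filter_false_of_mem fun x hx => (hmt x hx).not_gt, Finset.union_empty]
    rw [← Finset.union_singleton,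
      eX_union_of_forall_lt K fun x hx y hy => mem_singleton.mp hy ▸ hmt x hx, ← mul_assoc,
      ih (disjoint_of_subset_right (subset_insert m t) h), smul_mul_assoc,
      eX_mul_eX_singleton K hmst, smul_smul, ← pow_add, Finset.union_singleton, sum_insert hmt',
      hcount, add_comm, Finset.union_insert]

end Monomials

section Boundary

variable {K : Type*} [Field K] {n : ℕ}

lemma sum_erase_eq_neg_one_pow_smul_delB_mul_eX {C U : Finset (Fin n)} (hCU : C ⊆ U) :
    ∑ i ∈ C, (-1 : K) ^ (#{j ∈ U | j < i} + 1) • eX K (U.erase i) =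
      (-1 : K) ^ (∑ b ∈ U \ C, #{a ∈ C | b < a}) • (delB K C * eX K (U \ C)) := by
  rw [delB, sum_mul, smul_sum]
  refine sum_congr rfl fun i hi => ?_
  have hdisj : Disjoint (C.erase i) (U \ C) :=
    disjoint_of_subset_left (erase_subset i C) disjoint_sdiff
  have hunion : C.erase i ∪ U \ C = U.erase i := by
    conv_rhs => rw [← union_sdiff_of_subset hCU]
    rw [erase_union_distrib, erase_eq_of_notMem fun h => (mem_sdiff.mp h).2 hi]
  have hsplit : #{j ∈ U | j < i} = #{j ∈ C | j < i} + #{j ∈ U \ C | j < i} := by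
    rw [← card_union_of_disjoint (disjoint_filter_filter disjoint_sdiff), ← filter_union,
      union_sdiff_of_subset hCU]
  have hcount : ∑ b ∈ U \ C, #{a ∈ C.erase i | b < a} + #{j ∈ U \ C | j < i} =
      ∑ b ∈ U \ C, #{a ∈ C | b < a} := by
    rw [card_filter, ← sum_add_distrib]
    refine sum_congr rfl fun b _ => ?_
    rw [card_filter, card_filter, ← sum_erase_add C _ hi]
  rw [smul_mul_assoc, eX_mul_eX K hdisj, hunion, smul_smul, smul_smul, ← hcount, hsplit]
  congr 1
  -- the two exponents differ by twice the number of inversions between `C \ i` and `U \ C`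
  have hsq : (-1 : K) ^ (2 * ∑ b ∈ U \ C, #{a ∈ C.erase i | b < a}) = 1 := by
    rw [pow_mul, neg_one_sq, one_pow]
  linear_combination (-(-1 : K) ^ (#{j ∈ C | j < i} + #{j ∈ U \ C | j < i} + 1)) * hsq

lemma chiB_eq_sum_of_indep_erase_iff {M : Matroid (Fin n)} {C U : Finset (Fin n)} (hCU : C ⊆ U)
    (h : ∀ i ∈ U, M.Indep (U.erase i : Set (Fin n)) ↔ i ∈ C) :
    chiB K M U = ∑ i ∈ C, (-1 : K) ^ (#{j ∈ U | j < i} + 1) • eX K (U.erase i) := by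
  rw [chiB, ← sum_subset hCU fun i hiU hiC => by rw [if_neg (mt (h i hiU).mp hiC), zero_smul]]
  exact sum_congr rfl fun i hi => by rw [if_pos ((h i (hCU hi)).mpr hi)]

lemma chiB_eq_delB {M : Matroid (Fin n)} {C : Finset (Fin n)}
    (hC : IsCircuit M (C : Set (Fin n))) : chiB K M C = delB K C :=
  chiB_eq_sum_of_indep_erase_iff subset_rfl fun i hi => iff_of_true
    (by rw [coe_erase]; exact (isCircuit_iff_matroid_isCircuit.mp hC).sdiff_singleton_indep hi) hi

end Boundary

theorem boundary_unidependent_general {K : Type*} [Field K] {n : ℕ} (M : Matroid (Fin n))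
    (U C : Finset (Fin n)) (hUE : (U : Set (Fin n)) ⊆ M.E)
    (hC : IsCircuit M (C : Set (Fin n))) (hCU : C ⊆ U)
    (huni : ∃! D : Set (Fin n), IsCircuit M D ∧ D ⊆ (U : Set (Fin n))) :
    (∃ ε : K, (ε = 1 ∨ ε = -1) ∧ chiB K M U = ε • (chiB K M C * eX K (U \ C))) ∧
      chiB K M U ∈ OSIdeal K M := by
  have hCU' : (C : Set (Fin n)) ⊆ U := coe_subset.mpr hCU
  have huniq : ∀ D, M.IsCircuit D → D ⊆ U → D = C := fun D hD hDU =>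
    huni.unique ⟨isCircuit_iff_matroid_isCircuit.mpr hD, hDU⟩ ⟨hC, hCU'⟩
  have hindep : ∀ i ∈ U, M.Indep (U.erase i : Set (Fin n)) ↔ i ∈ C := fun i _ => by
    rw [coe_erase,
      (isCircuit_iff_matroid_isCircuit.mp hC).indep_diff_singleton_iff hCU' hUE huniq, mem_coe]
  have hmain : chiB K M U =
      (-1 : K) ^ (∑ b ∈ U \ C, #{a ∈ C | b < a}) • (chiB K M C * eX K (U \ C)) := by
    rw [chiB_eq_sum_of_indep_erase_iff hCU hindep, sum_erase_eq_neg_one_pow_smul_delB_mul_eX hCU,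
      chiB_eq_delB hC]
  refine ⟨⟨_, neg_one_pow_eq_or K _, hmain⟩, ?_⟩
  rw [hmain, chiB_eq_delB hC]
  exact Submodule.smul_mem _ _ (Submodule.subset_span ⟨1, eX K (U \ C), C, hC, by rw [one_mul]⟩)

/-- If `U` is a unidependent set of `M` with unique circuit `C ⊆ U`, then
`∂e_U = ± (∂e_C) * e_{U \ C}` in the exterior algebra; in particular `∂e_U` lies in
the ideal generated by the circuit boundaries. -/
theorem boundary_unidependent {K : Type*} [Field K] {n : ℕ} (M : Matroid (Fin n))
    (U C : Finset (Fin n)) (hUE : (U : Set (Fin n)) ⊆ M.E)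
    (hC : IsCircuit M (C : Set (Fin n))) (hCcard : 1 < C.card) (hCU : C ⊆ U)
    (huni : ∃! D : Set (Fin n), IsCircuit M D ∧ D ⊆ (U : Set (Fin n))) :
    (∃ ε : K, (ε = 1 ∨ ε = -1) ∧ chiB K M U = ε • (chiB K M C * eX K (U \ C))) ∧
      chiB K M U ∈ OSIdeal K M :=
  boundary_unidependent_general M U C hUE hC hCU huni
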